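/- arXiv:2509.07954 — 2 statements merged into one kernel-verified Lean document; each statement's English description precedes it below -/
import Mathlib

section
/- Let F be a graph of order t ≥ 2 and let G be an F-free graph. Assume that Q₁, Q₂, …, Q_t are symmetric subgraphs of G. Let G′ be the graph obtained from G by adding a new copy Q of Q₁ such that Q, Q₁, Q₂, …, Q_t are symmetric subgraphs in G′ (i.e., each new vertex of Q is joined to exactly the same vertices of V(G) ∖ (V(Q₁) ∪ ⋯ ∪ V(Q_t)) as its corresponding vertex of Q₁). Then G′ is also F-free. -/
open SimpleGraph

/-- `G` contains a (not necessarily induced) copy of `F`. -/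
def ContainsCopy {V W : Type*} (F : SimpleGraph V) (G : SimpleGraph W) : Prop :=
  ∃ f : V → W, Function.Injective f ∧ ∀ ⦃a b : V⦄, F.Adj a b → G.Adj (f a) (f b)

/-- `Q 0, …, Q (τ-1)` are symmetric subgraphs of the induced subgraph `G[A]`:
they are connected, pairwise disjoint, contained in `A`, and pairwise isomorphic
via isomorphisms under which corresponding vertices have the same neighbours in
`A` outside all of the `Q i`. -/
def SymmetricSubgraphsOn {V : Type*} (G : SimpleGraph V) (A : Set V) {τ : ℕ}
    (Q : Fin τ → Set V) : Prop :=
  (∀ i, Q i ⊆ A) ∧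
  (∀ i, (G.induce (Q i)).Connected) ∧
  (Pairwise fun i j => Disjoint (Q i) (Q j)) ∧
  ∃ ψ : ∀ i j : Fin τ, (Q i) ≃ (Q j),
    (∀ i j, ∀ a b : Q i, G.Adj (a : V) (b : V) ↔ G.Adj (ψ i j a : V) (ψ i j b : V)) ∧
    (∀ i j, ∀ u : Q i, ∀ v ∈ A \ ⋃ k, Q k,
      (G.Adj (u : V) v ↔ G.Adj (ψ i j u : V) v))

/-- Symmetric subgraphs of `G` itself. -/
abbrev SymmetricSubgraphs {V : Type*} (G : SimpleGraph V) {τ : ℕ} (Q : Fin τ → Set V) : Prop :=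
  SymmetricSubgraphsOn G Set.univ Q

/-- The graph `G'` obtained from `G` by adding a new copy of the induced subgraph on `Q0`
(one new vertex for each vertex of `Q0`), where each new vertex is joined to the copy of
its neighbours inside `Q0` and to exactly the same vertices of `V(G) ∖ ⋃ i, Q i` as the
vertex of `Q0` it corresponds to. -/
def addCopy {V : Type*} (G : SimpleGraph V) {τ : ℕ} (Q : Fin τ → Set V) (Q0 : Set V) :
    SimpleGraph (V ⊕ ↥Q0) where
  Adj x y :=
    match x, y with
    | Sum.inl a, Sum.inl b => G.Adj a b
    | Sum.inl a, Sum.inr u => a ∉ (⋃ i, Q i) ∧ G.Adj a (u : V)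
    | Sum.inr u, Sum.inl a => a ∉ (⋃ i, Q i) ∧ G.Adj a (u : V)
    | Sum.inr u, Sum.inr w => G.Adj (u : V) (w : V)
  symm := by
    constructor
    rintro (a|a) (b|b) h
    · exact h.symm
    · exact h
    · exact h
    · exact h.symm
  loopless := by
    constructor
    rintro (a|a) h
    · exact G.irrefl h
    · exact G.irrefl h

/-! Take a copy `f` of `F` in `G'`. If it uses no new vertex it is a copy in `G`. Otherwise at most
`t - 1` of its `t` vertices are old, so one of the `t` disjoint parts `Q j` contains none of them;
replacing each new vertex by its image in `Q j` under `Q 0 ≅ Q j` gives a copy of `F` in `G`,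
because the new copy and `Q j` have the same neighbours outside `⋃ i, Q i`. -/

open Function Set

lemma exists_disjoint_of_ncard_lt {ι V : Type*} {Q : ι → Set V}
    (hQ : Pairwise (Disjoint on Q)) {S : Set V} (hS : S.Finite) (hcard : S.ncard < Nat.card ι) :
    ∃ i, Disjoint S (Q i) := by
  by_contra! h
  choose a haS haQ using fun i => Set.not_disjoint_iff.mp (h i)
  have ha : Injective a := fun i j hij => by
    by_contra hne
    exact Set.disjoint_left.mp (hQ hne) (haQ i) (hij ▸ haQ j)
  have := ncard_le_ncard_of_injOn (s := univ) a (fun i _ => haS i) ha.injOn hS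
  rw [ncard_univ] at this
  exact hcard.not_ge this

lemma ncard_preimage_inl_range_lt {α V W : Type*} [Finite α] {f : α → V ⊕ W} (hf : Injective f)
    {y : α} {u : W} (hy : f y = Sum.inr u) :
    (Sum.inl ⁻¹' range f).ncard < Nat.card α := by
  have hy_new : f y ∉ Sum.inl '' (Sum.inl ⁻¹' range f) := by
    rintro ⟨b, -, hb⟩
    exact Sum.inl_ne_inr (hb.trans hy)
  calc (Sum.inl ⁻¹' range f).ncard = (Sum.inl '' (Sum.inl ⁻¹' range f)).ncard :=
        (ncard_image_of_injective _ Sum.inl_injective).symm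
    _ < (range f).ncard :=
        ncard_lt_ncard (ssubset_of_subset_not_subset (image_preimage_subset _ _)
          fun h => hy_new (h (mem_range_self y))) (finite_range f)
    _ = Nat.card α := ncard_range_of_injective hf

lemma exists_forall_inl_notMem {α ι V W : Type*} [Finite α] [Nonempty ι]
    {f : α → V ⊕ W} (hf : Injective f) {Q : ι → Set V} (hQ : Pairwise (Disjoint on Q))
    (hcard : Nat.card α ≤ Nat.card ι) :
    ∃ j, ∀ x y a u, f x = Sum.inl a → f y = Sum.inr u → a ∉ Q j := by
  by_cases hnew : ∃ y u, f y = Sum.inr u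
  · obtain ⟨y, u, hy⟩ := hnew
    obtain ⟨j, hj⟩ := exists_disjoint_of_ncard_lt hQ
      ((finite_range f).preimage Sum.inl_injective.injOn)
      ((ncard_preimage_inl_range_lt hf hy).trans_le hcard)
    exact ⟨j, fun x _ a _ hx _ => Set.disjoint_left.mp hj ⟨x, hx⟩⟩
  · push Not at hnew
    exact ⟨Classical.arbitrary ι, fun _ y _ u _ hy => absurd hy (hnew y u)⟩

lemma injective_sumElim_id_comp {α V W : Type*} {f : α → V ⊕ W} (hf : Injective f) {φ : W → V}
    (hφ : Injective φ) (hsep : ∀ x y a u, f x = Sum.inl a → f y = Sum.inr u → a ≠ φ u) :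
    Injective (Sum.elim id φ ∘ f) := by
  intro x y hxy
  apply hf
  rcases hx : f x with a | u <;> rcases hy : f y with b | w <;>
    simp only [comp_apply, hx, hy, Sum.elim_inl, Sum.elim_inr, id] at hxy
  · rw [hxy]
  · exact absurd hxy (hsep x y a w hx hy)
  · exact absurd hxy.symm (hsep y x b u hy hx)
  · rw [hφ hxy]

def addCopy.fold {V : Type*} (G : SimpleGraph V) {τ : ℕ} (Q : Fin τ → Set V) {Q0 : Set V}
    (φ : Q0 → V) (hφ : ∀ u w : Q0, G.Adj u w → G.Adj (φ u) (φ w))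
    (hout : ∀ (u : Q0) v, v ∉ ⋃ i, Q i → G.Adj u v → G.Adj (φ u) v) :
    addCopy G Q Q0 →g G where
  toFun := Sum.elim id φ
  map_rel' := by
    rintro (a | u) (b | w) h
    · exact h
    · exact (hout w a h.1 h.2.symm).symm
    · exact hout u b h.1 h.2.symm
    · exact hφ u w h

/-- **Observation 1.** If `F` has order `t ≥ 2`, `G` is `F`-free and
`Q 0, …, Q (t-1)` are symmetric subgraphs of `G`, then the graph `G'` obtained from `G`
by adding a new copy of `Q 0` so that the new copy together with `Q 0, …, Q (t-1)` are
symmetric subgraphs of `G'` is again `F`-free. -/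
theorem observation_one {α V : Type*} [Fintype α] {t : ℕ} (ht : 2 ≤ t)
    (F : SimpleGraph α) (hcard : Fintype.card α = t)
    (G : SimpleGraph V) (hfree : ¬ ContainsCopy F G)
    (Q : Fin t → Set V) (hsym : SymmetricSubgraphs G Q) :
    ¬ ContainsCopy F (addCopy G Q (Q ⟨0, by omega⟩)) := by
  rintro ⟨f, hf_inj, hf_adj⟩
  obtain ⟨-, -, hdisj, ψ, hψ_adj, hψ_out⟩ := hsym
  let i₀ : Fin t := ⟨0, by omega⟩
  have : Nonempty (Fin t) := ⟨i₀⟩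
  obtain ⟨j, hj⟩ := exists_forall_inl_notMem hf_inj hdisj (by simp [hcard])
  let φ : Q i₀ → V := fun u => ψ i₀ j u
  have hφ_inj : Injective φ := Subtype.val_injective.comp (ψ i₀ j).injective
  let fold := addCopy.fold G Q φ (fun u w => (hψ_adj i₀ j u w).mp)
    (fun u v hv => (hψ_out i₀ j u v ⟨mem_univ v, hv⟩).mp)
  refine hfree ⟨fold ∘ f, ?_, fun a b hab => fold.map_adj (hf_adj hab)⟩
  exact injective_sumElim_id_comp hf_inj hφ_inj
    fun x y a u hx hy ha => hj x y a u hx hy (ha ▸ (ψ i₀ j u).2)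
end

section
/- Let 𝓕 be a finite family of graphs with min_{F∈𝓕} χ(F) = r+1 ≥ 3, t = max_{F∈𝓕} |F| and q = q(𝓕). For large m, let 𝒢_m be the set of 𝓕-free graphs H on m vertices admitting a partition V(H) = W ∪ S₁ ∪ ⋯ ∪ S_r with |W| = q−1, |S_i| = ⌊(m−q+1)/r⌋ or ⌈(m−q+1)/r⌉, and for each i a subset S'_i ⊆ S_i with |S_i − S'_i| ≤ t² and N_H(v) = V(H) − S_i for all v ∈ S'_i. For H ∈ 𝒢_m, let 𝒟(H) ∈ 𝒢_{m+r} be obtained from H by adding, for each 1 ≤ i ≤ r, a new vertex x_i placed in S_i with N(x_i) = V(𝒟(H)) − (S_i ∪ {x_i}), and let 𝒟⁻¹(H) ∈ 𝒢_{m−r} be obtained from H by deleting one vertex of S'_i for each 1 ≤ i ≤ r. If H has the maximum number of edges among all graphs in 𝒢_m, then 𝒟(H) has the maximum number of edges among all graphs in 𝒢_{m+r}, and 𝒟⁻¹(H) has the maximum number of edges among all graphs in 𝒢_{m−r}. -/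
open SimpleGraph

/-- The join `G ⊗ H` of two graphs. -/
def gJoin {α β : Type*} (G : SimpleGraph α) (H : SimpleGraph β) : SimpleGraph (α ⊕ β) where
  Adj x y :=
    match x, y with
    | Sum.inl a, Sum.inl b => G.Adj a b
    | Sum.inr a, Sum.inr b => H.Adj a b
    | _, _ => True
  symm := by constructor; rintro (a|a) (b|b) h <;> simp_all <;> exact h.symm
  loopless := by constructor; rintro (a|a) h <;> simp_all

/-- The disjoint union `G ∪ H` of two graphs. -/
def gUnion {α β : Type*} (G : SimpleGraph α) (H : SimpleGraph β) : SimpleGraph (α ⊕ β) where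
  Adj x y :=
    match x, y with
    | Sum.inl a, Sum.inl b => G.Adj a b
    | Sum.inr a, Sum.inr b => H.Adj a b
    | _, _ => False
  symm := by constructor; rintro (a|a) (b|b) h <;> simp_all <;> exact h.symm
  loopless := by constructor; rintro (a|a) h <;> simp_all

/-- The disjoint union `mH` of `m` copies of `H`. -/
def gCopies (m : ℕ) {α : Type*} (H : SimpleGraph α) : SimpleGraph (Fin m × α) where
  Adj x y := x.1 = y.1 ∧ H.Adj x.2 y.2
  symm := by constructor; rintro ⟨i, a⟩ ⟨j, b⟩ ⟨h1, h2⟩; exact ⟨h1.symm, h2.symm⟩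
  loopless := by constructor; rintro ⟨i, a⟩ ⟨_, h⟩; exact H.loopless.irrefl a h

/-- Number of edges of a graph. -/
noncomputable def edgeCount {V : Type*} (G : SimpleGraph V) : ℕ := G.edgeSet.ncard

/-- A finite graph, packaged with its number of vertices. -/
def FinGraph : Type := (n : ℕ) × SimpleGraph (Fin n)

/-- `G` contains no member of the family `𝓕`. -/
def FamFree {ι V : Type*} (𝓕 : ι → FinGraph) (G : SimpleGraph V) : Prop :=
  ∀ i, ¬ ContainsCopy (𝓕 i).2 G

/-- The defining partition for membership of `H` in `𝒢_m` (`m = |V|`):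
`V(H) = W ∪ S₁ ∪ ⋯ ∪ S_r` with `|W| = q-1`, `|S_i| = ⌊(m-q+1)/r⌋` or `⌈(m-q+1)/r⌉`, and
subsets `S'_i ⊆ S_i` with `|S_i - S'_i| ≤ t²` such that every `v ∈ S'_i` is adjacent to
exactly the vertices outside `S_i`. -/
def GoodPartition {V : Type*} [Fintype V] (r t q : ℕ) (H : SimpleGraph V)
    (W : Set V) (S S' : Fin r → Set V) : Prop :=
  (∀ v, v ∈ W ∨ ∃ i, v ∈ S i) ∧
  (∀ i, Disjoint W (S i)) ∧
  (Pairwise fun i j => Disjoint (S i) (S j)) ∧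
  W.ncard = q - 1 ∧
  (∀ i, (S i).ncard = (Fintype.card V - q + 1) / r ∨
        (S i).ncard = (Fintype.card V - q + 1 + r - 1) / r) ∧
  (∀ i, S' i ⊆ S i ∧ (S i \ S' i).ncard ≤ t ^ 2 ∧
    ∀ v ∈ S' i, H.neighborSet v = Set.univ \ S i)

/-- `H ∈ 𝒢_m` where `m = |V(H)|`. -/
def InGm {ι : Type*} (𝓕 : ι → FinGraph) (r t q : ℕ) {V : Type*} [Fintype V]
    (H : SimpleGraph V) : Prop :=
  FamFree 𝓕 H ∧ ∃ W S S', GoodPartition r t q H W S S'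

/-- The graph `𝒟(H)`: for each `1 ≤ i ≤ r` a new vertex `x_i` is added to the part `S_i`,
joined to everything outside `S_i ∪ {x_i}`. -/
def extendGraph {V : Type*} (H : SimpleGraph V) {r : ℕ} (S : Fin r → Set V) :
    SimpleGraph (V ⊕ Fin r) where
  Adj x y :=
    match x, y with
    | Sum.inl a, Sum.inl b => H.Adj a b
    | Sum.inl a, Sum.inr i => a ∉ S i
    | Sum.inr i, Sum.inl a => a ∉ S i
    | Sum.inr i, Sum.inr j => i ≠ j
  symm := by
    constructor
    rintro (a|a) (b|b) h
    · exact h.symm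
    · exact h
    · exact h
    · exact h.symm
  loopless := by
    constructor
    rintro (a|a) h
    · exact H.loopless.irrefl a h
    · exact h rfl

/-!
Since every `v ∈ S'ᵢ` is adjacent to exactly `V(H) ∖ Sᵢ`, deleting one such vertex from each
`S'ᵢ` and re-adding the `r` vertices `xᵢ` are inverse operations up to isomorphism (`𝒟 ∘ 𝒟⁻¹ ≅ id`),
and for a member of `𝒢ₙ` the operation `𝒟` adds `(r - 1) n + (q - 1) + C(r, 2)` edges, a number
depending on `n` only. Moreover `𝒟` preserves `𝓕`-freeness once the sets `S'ᵢ` have more than `t`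
vertices: a copy of `F ∈ 𝓕` uses at most `t` vertices, so each `xᵢ` in it can be replaced by an
unused vertex of `S'ᵢ`. Hence `𝒟 : 𝒢ₙ → 𝒢ₙ₊ᵣ` and `𝒟⁻¹ : 𝒢ₙ₊ᵣ → 𝒢ₙ` both shift edge counts by the
same amount, so they carry maximisers to maximisers.
-/

open Finset Function

lemma SimpleGraph.neighborSet_eq_univ_diff_iff {V : Type*} {G : SimpleGraph V} {v : V} {A : Set V} :
    G.neighborSet v = Set.univ \ A ↔ ∀ w, G.Adj v w ↔ w ∉ A := by
  simp [Set.ext_iff]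

lemma eq_div_or_ceil_div_add_iff {r n s : ℕ} (hr : 0 < r) :
    (s + 1 = (n + r) / r ∨ s + 1 = (n + r + r - 1) / r) ↔
      (s = n / r ∨ s = (n + r - 1) / r) := by
  rw [show n + r + r - 1 = n + r - 1 + r by omega, Nat.add_div_right _ hr,
    Nat.add_div_right _ hr]
  omega

lemma SimpleGraph.Iso.edgeCount_eq {V V' : Type*} {G : SimpleGraph V} {G' : SimpleGraph V'}
    (φ : G ≃g G') : edgeCount G = edgeCount G' := by
  rw [edgeCount, edgeCount, ← Nat.card_coe_set_eq, ← Nat.card_coe_set_eq]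
  exact Nat.card_congr φ.mapEdgeSet

section Deletion

variable {ι V : Type*} {S : ι → Set V} {x : ι → V}

lemma injective_of_forall_mem (hdisj : Pairwise (Disjoint on S)) (hx : ∀ i, x i ∈ S i) :
    Injective x := fun i j hij =>
  by_contra fun hne => (hdisj hne).notMem_of_mem_left (hx i) (hij ▸ hx j)

lemma inter_setOf_forall_ne (hdisj : Pairwise (Disjoint on S)) (hx : ∀ i, x i ∈ S i) (i : ι) :
    S i ∩ {v | ∀ j, v ≠ x j} = S i \ {x i} := by
  ext v
  refine ⟨fun ⟨hv, hne⟩ => ⟨hv, hne i⟩, fun ⟨hv, hne⟩ => ⟨hv, fun j hj => ?_⟩⟩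
  obtain rfl | hij := eq_or_ne i j
  · exact hne hj
  · exact (hdisj hij).notMem_of_mem_left hv (hj ▸ hx j)

lemma ncard_preimage_val (T B : Set V) :
    (Subtype.val ⁻¹' B : Set T).ncard = (B ∩ T).ncard := by
  rw [← Set.ncard_image_of_injective _ Subtype.val_injective, Set.image_preimage_eq_inter_range,
    Subtype.range_coe]

lemma card_setOf_forall_ne [Fintype ι] [Fintype V] (hx : Injective x)
    [Fintype {v | ∀ i, v ≠ x i}] :
    Fintype.card {v | ∀ i, v ≠ x i} = Fintype.card V - Fintype.card ι := by
  have hcompl : {v | ∀ i, v ≠ x i} = (Set.range x)ᶜ := by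
    ext v; simp [eq_comm]
  rw [← Nat.card_eq_fintype_card, Nat.card_coe_set_eq, hcompl, Set.ncard_compl,
    Set.ncard_range_of_injective hx, Nat.card_eq_fintype_card, Nat.card_eq_fintype_card]

end Deletion

section Extension

variable {V : Type*} (H : SimpleGraph V) {r : ℕ} (S : Fin r → Set V)

@[simp] lemma extendGraph_adj_inl_inl (a b : V) :
    (extendGraph H S).Adj (.inl a) (.inl b) ↔ H.Adj a b := Iff.rfl

@[simp] lemma extendGraph_adj_inl_inr (a : V) (i : Fin r) :
    (extendGraph H S).Adj (.inl a) (.inr i) ↔ a ∉ S i := Iff.rfl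

@[simp] lemma extendGraph_adj_inr_inl (i : Fin r) (a : V) :
    (extendGraph H S).Adj (.inr i) (.inl a) ↔ a ∉ S i := Iff.rfl

@[simp] lemma extendGraph_adj_inr_inr (i j : Fin r) :
    (extendGraph H S).Adj (.inr i) (.inr j) ↔ i ≠ j := Iff.rfl

lemma edgeCount_eq_card_edgeFinset [Fintype V] [Fintype H.edgeSet] :
    edgeCount H = #H.edgeFinset := by
  rw [edgeCount, Set.ncard_eq_toFinset_card', SimpleGraph.edgeFinset]

lemma edgeCount_extendGraph [Fintype V] :
    edgeCount (extendGraph H S) = edgeCount H + ∑ i, (S i)ᶜ.ncard + r.choose 2 := by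
  classical
  have hnbr_inl (a : V) : (extendGraph H S).neighborFinset (.inl a) =
      (H.neighborFinset a).disjSum {i | a ∉ S i} := by
    ext (b | i) <;> simp
  have hnbr_inr (i : Fin r) : (extendGraph H S).neighborFinset (.inr i) =
      ({a | a ∉ S i} : Finset V).disjSum {j | i ≠ j} := by
    ext (b | j) <;> simp
  have hcompl (i : Fin r) : #{a | a ∉ S i} = (S i)ᶜ.ncard := by
    rw [Set.ncard_eq_toFinset_card']; congr 1; ext; simp
  have hswap : ∑ a, #{i | a ∉ S i} = ∑ i, (S i)ᶜ.ncard := by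
    simp only [card_filter, ← hcompl]
    exact sum_comm
  have hpairs : ∑ i : Fin r, #{j | i ≠ j} = 2 * r.choose 2 := by
    simp only [filter_ne, card_erase_of_mem (mem_univ _), card_univ, Fintype.card_fin,
      sum_const, smul_eq_mul, Nat.choose_two_right]
    exact (Nat.mul_div_cancel' r.even_mul_pred_self.two_dvd).symm
  have hdouble : 2 * edgeCount (extendGraph H S) =
      2 * edgeCount H + 2 * ∑ i, (S i)ᶜ.ncard + 2 * r.choose 2 := by
    simp only [edgeCount_eq_card_edgeFinset, ← SimpleGraph.sum_degrees_eq_twice_card_edges,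
      Fintype.sum_sum_type, ← SimpleGraph.card_neighborFinset_eq_degree, hnbr_inl, hnbr_inr,
      card_disjSum, sum_add_distrib, hswap, hcompl, hpairs]
    ring
  omega

end Extension

noncomputable def extendGraphInduceIso {V : Type*} {r : ℕ} (H : SimpleGraph V)
    {S : Fin r → Set V} (hdisj : Pairwise (Disjoint on S)) {x : Fin r → V}
    (hx : ∀ i, x i ∈ S i) (hadj : ∀ i w, H.Adj (x i) w ↔ w ∉ S i) :
    extendGraph (H.induce {v | ∀ i, v ≠ x i}) (fun i => Subtype.val ⁻¹' S i) ≃g H where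
  toEquiv := Equiv.ofBijective (Sum.elim Subtype.val x)
    ⟨Subtype.val_injective.sumElim (injective_of_forall_mem hdisj hx) fun v i => v.2 i,
      fun w => by
        by_cases hw : ∃ i, w = x i
        · obtain ⟨i, rfl⟩ := hw
          exact ⟨.inr i, rfl⟩
        · exact ⟨.inl ⟨w, fun i hi => hw ⟨i, hi⟩⟩, rfl⟩⟩
  map_rel_iff' {a b} := by
    rcases a with a | i <;> rcases b with b | j
    · exact Iff.rfl
    · simpa [H.adj_comm] using hadj j a
    · simpa using hadj i b
    · have hxj : x j ∈ S i ↔ i = j := by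
        refine ⟨fun hj => by_contra fun hij => (hdisj hij).notMem_of_mem_right (hx j) hj, ?_⟩
        rintro rfl
        exact hx i
      simpa [hxj] using hadj i (x j)

def extendGraphCollapse {V : Type*} {H : SimpleGraph V} {r : ℕ} {S : Fin r → Set V}
    (v : Fin r → V)
    (hv : ∀ i w, w ∉ S i → H.Adj (v i) w) (hvS : ∀ i j, i ≠ j → v j ∉ S i) :
    extendGraph H S →g H where
  toFun := Sum.elim id v
  map_rel' {a b} hab := by
    rcases a with a | i <;> rcases b with b | j
    · exact hab
    · exact (hv j a hab).symm
    · exact hv i b hab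
    · exact hv i (v j) (hvS i j hab)

section FamFree

variable {ι V : Type*} {𝓕 : ι → FinGraph} {H : SimpleGraph V}

lemma FamFree.of_copy {V' : Type*} {H' : SimpleGraph V'} (h : FamFree 𝓕 H) (c : H'.Copy H) :
    FamFree 𝓕 H' :=
  fun k ⟨f, hf, hadj⟩ =>
    h k ⟨c ∘ f, c.injective.comp hf, fun _ _ hab => c.toHom.map_adj (hadj hab)⟩

lemma FamFree.extendGraph {n r : ℕ} {S S' : Fin r → Set V} (h : FamFree 𝓕 H)
    (hn : ∀ k, (𝓕 k).1 ≤ n) (hdisj : Pairwise (Disjoint on S)) (hS' : ∀ i, S' i ⊆ S i)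
    (hadj : ∀ i, ∀ v ∈ S' i, ∀ w, w ∉ S i → H.Adj v w)
    (hbig : ∀ i, n < (S' i).ncard) :
    FamFree 𝓕 (extendGraph H S) := by
  rintro k ⟨f, hf, hfadj⟩
  set A : Set V := Sum.inl ⁻¹' Set.range f
  have hA : A.ncard ≤ n := calc
    A.ncard = (Sum.inl '' A : Set (V ⊕ Fin r)).ncard :=
      (Set.ncard_image_of_injective _ Sum.inl_injective).symm
    _ ≤ (Set.range f).ncard := Set.ncard_le_ncard (Set.image_preimage_subset _ _)
    _ = (𝓕 k).1 := by rw [Set.ncard_range_of_injective hf, Nat.card_eq_fintype_card,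
        Fintype.card_fin]
    _ ≤ n := hn k
  have hAfin : A.Finite := (Set.finite_range f).preimage Sum.inl_injective.injOn
  -- the copy misses some `v i ∈ S' i`, so collapsing `inr i` onto `v i` keeps it injective
  choose v hv using fun i => Set.sdiff_nonempty_of_ncard_lt_ncard (hA.trans_lt (hbig i)) hAfin
  have hvS (i : Fin r) : v i ∈ S i := hS' i (hv i).1
  have hv_notMem (i j : Fin r) (hij : i ≠ j) : v j ∉ S i :=
    (hdisj hij).notMem_of_mem_right (hvS j)
  let ρ := extendGraphCollapse v (fun i => hadj i (v i) (hv i).1) hv_notMem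
  refine h k ⟨ρ ∘ f, fun b c hbc => hf ?_, fun _ _ hab => ρ.map_adj (hfadj hab)⟩
  have hρ : ⇑ρ = Sum.elim id v := rfl
  have hvA (i : Fin r) (b : Fin (𝓕 k).1) : f b ≠ .inl (v i) := fun hb => (hv i).2 ⟨b, hb⟩
  rcases hfb : f b with b' | i <;> rcases hfc : f c with c' | j <;>
    simp only [comp_apply, hfb, hfc, hρ, Sum.elim_inl, Sum.elim_inr, id] at hbc
  · rw [hbc]
  · exact absurd (hfb.trans (congrArg _ hbc)) (hvA j b)
  · exact absurd (hfc.trans (congrArg _ hbc.symm)) (hvA i c)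
  · rw [injective_of_forall_mem hdisj hvS hbc]

end FamFree

namespace GoodPartition

variable {ι V : Type*} [Fintype V] {𝓕 : ι → FinGraph} {r t q : ℕ} {H : SimpleGraph V}
  {W : Set V} {S S' : Fin r → Set V}

lemma pairwise_disjoint (h : GoodPartition r t q H W S S') : Pairwise (Disjoint on S) :=
  h.2.2.1

lemma adj_iff (h : GoodPartition r t q H W S S') {i : Fin r} {v : V} (hv : v ∈ S' i) (w : V) :
    H.Adj v w ↔ w ∉ S i :=
  neighborSet_eq_univ_diff_iff.mp ((h.2.2.2.2.2 i).2.2 v hv) w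

lemma mem_S (h : GoodPartition r t q H W S S') {i : Fin r} {v : V} (hv : v ∈ S' i) : v ∈ S i :=
  (h.2.2.2.2.2 i).1 hv

lemma q_sub_one_add_sum_ncard (h : GoodPartition r t q H W S S') :
    q - 1 + ∑ i, (S i).ncard = Fintype.card V := by
  obtain ⟨hcover, hdisjW, hdisj, hW, -, -⟩ := h
  have huniv : W ∪ ⋃ i, S i = Set.univ :=
    Set.eq_univ_of_forall fun v => by simpa using hcover v
  rw [← Nat.card_eq_fintype_card, ← Set.ncard_univ, ← huniv,
    Set.ncard_union_eq (Set.disjoint_iUnion_right.mpr hdisjW),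
    Set.ncard_iUnion_of_finite (fun _ => Set.toFinite _) hdisj, finsum_eq_sum_of_fintype, hW]

lemma lt_ncard_S' (h : GoodPartition r t q H W S S') (hr : 0 < r)
    (hV : r * (t ^ 2 + t + 1) ≤ Fintype.card V - q + 1) (i : Fin r) : t < (S' i).ncard := by
  obtain ⟨-, -, -, -, hsize, hS'⟩ := h
  have hsplit : (S i).ncard ≤ (S i \ S' i).ncard + (S' i).ncard :=
    Set.ncard_le_ncard_sdiff_add_ncard _ _
  have hfloor : (Fintype.card V - q + 1) / r ≤ (S i).ncard := by
    rcases hsize i with h | h <;> rw [h]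
    exact Nat.div_le_div_right (by omega)
  have hlarge : t ^ 2 + t + 1 ≤ (Fintype.card V - q + 1) / r :=
    (Nat.le_div_iff_mul_le hr).mpr (by rwa [Nat.mul_comm])
  have := (hS' i).2.1
  omega

lemma card_setOf_forall_ne (h : GoodPartition r t q H W S S') {x : Fin r → V}
    (hx : ∀ i, x i ∈ S' i) [Fintype {v | ∀ i, v ≠ x i}] :
    Fintype.card {v | ∀ i, v ≠ x i} = Fintype.card V - r := by
  rw [_root_.card_setOf_forall_ne (injective_of_forall_mem h.pairwise_disjoint
    fun i => h.mem_S (hx i)), Fintype.card_fin]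

lemma extend (h : GoodPartition r t q H W S S') (hr : 0 < r) (hq : q ≤ Fintype.card V) :
    GoodPartition r t q (extendGraph H S) (Sum.inl '' W)
      (fun i => Sum.inl '' S i ∪ {.inr i}) (fun i => Sum.inl '' S' i ∪ {.inr i}) := by
  have hcard : Fintype.card (V ⊕ Fin r) - q + 1 = Fintype.card V - q + 1 + r := by
    rw [Fintype.card_sum, Fintype.card_fin]; omega
  obtain ⟨hcover, hdisjW, hdisj, hW, hsize, hS'⟩ := id h
  refine ⟨?_, fun i => ?_, fun i j hij => ?_, ?_, fun i => ?_, fun i => ⟨?_, ?_, ?_⟩⟩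
  · rintro (a | i)
    · simpa using hcover a
    · exact .inr ⟨i, by simp⟩
  · rw [Set.disjoint_left]
    rintro (a | j) <;> simp +contextual [(hdisjW i).notMem_of_mem_left]
  · refine Set.disjoint_left.mpr ?_
    rintro (a | k) <;> simp +contextual [(hdisj hij).notMem_of_mem_left, hij]
  · rwa [Set.ncard_image_of_injective _ Sum.inl_injective]
  · dsimp only
    rw [Set.union_singleton, Set.ncard_insert_of_notMem (by simp),
      Set.ncard_image_of_injective _ Sum.inl_injective, hcard, eq_div_or_ceil_div_add_iff hr]
    exact hsize i
  · exact Set.union_subset_union_left _ (Set.image_mono (hS' i).1)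
  · have : (Sum.inl '' S i ∪ {.inr i}) \ (Sum.inl '' S' i ∪ {.inr i}) =
        (Sum.inl '' (S i \ S' i) : Set (V ⊕ Fin r)) := by
      ext (a | j) <;> simp
    rw [this, Set.ncard_image_of_injective _ Sum.inl_injective]
    exact (hS' i).2.1
  · rintro v (⟨a, ha, rfl⟩ | rfl) <;> rw [neighborSet_eq_univ_diff_iff] <;> rintro (b | j)
    · simpa using h.adj_iff ha b
    · obtain rfl | hij := eq_or_ne i j
      · simpa using (hS' i).1 ha
      · simpa [hij.symm] using (hdisj hij).notMem_of_mem_left ((hS' i).1 ha)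
    · simp
    · simp [eq_comm]

lemma induce (h : GoodPartition r t q H W S S') (hr : 0 < r) (hq : q + r ≤ Fintype.card V)
    {x : Fin r → V} (hx : ∀ i, x i ∈ S' i) [Fintype {v | ∀ i, v ≠ x i}] :
    GoodPartition r t q (H.induce {v | ∀ i, v ≠ x i}) (Subtype.val ⁻¹' W)
      (fun i => Subtype.val ⁻¹' S i) (fun i => Subtype.val ⁻¹' S' i) := by
  obtain ⟨hcover, hdisjW, hdisj, hW, hsize, hS'⟩ := id h
  have hxS (i : Fin r) : x i ∈ S i := h.mem_S (hx i)
  have hcard := h.card_setOf_forall_ne hx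
  refine ⟨fun v => ?_, fun i => (hdisjW i).preimage _, fun i j hij => (hdisj hij).preimage _,
    ?_, fun i => ?_, fun i => ⟨Set.preimage_mono (hS' i).1, ?_, ?_⟩⟩
  · simpa using hcover v
  · have hWT : W ⊆ {v | ∀ i, v ≠ x i} := fun w hw i hwx =>
      (hdisjW i).notMem_of_mem_left hw (hwx ▸ hxS i)
    rwa [ncard_preimage_val, Set.inter_eq_left.mpr hWT]
  · have hsucc : (S i).ncard = ((S i).ncard - 1) + 1 := by
      have := Set.nonempty_of_mem (hxS i) |>.ncard_pos
      omega
    have hsize := hsize i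
    rw [hsucc, show Fintype.card V - q + 1 = Fintype.card V - r - q + 1 + r by omega,
      eq_div_or_ceil_div_add_iff hr] at hsize
    rw [ncard_preimage_val, inter_setOf_forall_ne hdisj hxS,
      Set.ncard_sdiff_singleton_of_mem (hxS i), hcard]
    exact hsize
  · rw [← Set.preimage_sdiff, ncard_preimage_val]
    exact (Set.ncard_le_ncard Set.inter_subset_left).trans (hS' i).2.1
  · rintro v hv
    rw [neighborSet_eq_univ_diff_iff]
    exact fun w => h.adj_iff hv w

lemma map {V' : Type*} [Fintype V'] {H' : SimpleGraph V'}
    (h : GoodPartition r t q H W S S') (φ : H ≃g H') :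
    GoodPartition r t q H' (φ '' W) (fun i => φ '' S i) (fun i => φ '' S' i) := by
  obtain ⟨hcover, hdisjW, hdisj, hW, hsize, hS'⟩ := id h
  have hφ : Injective φ := φ.injective
  refine ⟨fun v' => ?_, fun i => (Set.disjoint_image_iff hφ).mpr (hdisjW i),
    fun i j hij => (Set.disjoint_image_iff hφ).mpr (hdisj hij), ?_, fun i => ?_,
    fun i => ⟨Set.image_mono (hS' i).1, ?_, ?_⟩⟩
  · obtain ⟨v, rfl⟩ := φ.surjective v'
    simpa [hφ.mem_set_image] using hcover v
  · rwa [Set.ncard_image_of_injective _ hφ]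
  · rw [Set.ncard_image_of_injective _ hφ, ← Fintype.card_congr φ.toEquiv]
    exact hsize i
  · rw [← Set.image_sdiff hφ, Set.ncard_image_of_injective _ hφ]
    exact (hS' i).2.1
  · rintro _ ⟨v, hv, rfl⟩
    rw [neighborSet_eq_univ_diff_iff]
    intro w'
    obtain ⟨w, rfl⟩ := φ.surjective w'
    rw [φ.map_adj_iff, hφ.mem_set_image]
    exact h.adj_iff hv w

lemma edgeCount_extendGraph (h : GoodPartition r t q H W S S') (hr : 0 < r) :
    edgeCount (extendGraph H S) =
      edgeCount H + ((r - 1) * Fintype.card V + (q - 1) + r.choose 2) := by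
  have hsum := h.q_sub_one_add_sum_ncard
  have hcompl : ∑ i, (S i)ᶜ.ncard + ∑ i, (S i).ncard = r * Fintype.card V := by
    rw [← sum_add_distrib, sum_congr rfl fun i _ => Set.ncard_compl_add_ncard (S i)]
    simp
  rw [_root_.edgeCount_extendGraph, Nat.sub_one_mul]
  have := Nat.le_mul_of_pos_left (Fintype.card V) hr
  omega

lemma edgeCount_eq_edgeCount_induce_add (h : GoodPartition r t q H W S S') (hr : 0 < r)
    (hq : q + r ≤ Fintype.card V) {x : Fin r → V} (hx : ∀ i, x i ∈ S' i)
    [Fintype {v | ∀ i, v ≠ x i}] :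
    edgeCount H = edgeCount (H.induce {v | ∀ i, v ≠ x i}) +
      ((r - 1) * (Fintype.card V - r) + (q - 1) + r.choose 2) := by
  let φ := extendGraphInduceIso H h.pairwise_disjoint (fun i => h.mem_S (hx i))
    fun i => h.adj_iff (hx i)
  rw [← φ.edgeCount_eq, (h.induce hr hq hx).edgeCount_extendGraph hr, h.card_setOf_forall_ne hx]

lemma inGm_extendGraph (h : GoodPartition r t q H W S S') (hfree : FamFree 𝓕 H)
    (htmax : ∀ k, (𝓕 k).1 ≤ t) (hr : 0 < r)
    (hV : q + r * (t ^ 2 + t + 1) ≤ Fintype.card V) :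
    InGm 𝓕 r t q (extendGraph H S) := by
  have hq : q ≤ Fintype.card V := by nlinarith
  refine ⟨hfree.extendGraph htmax h.pairwise_disjoint (fun _ _ hv => h.mem_S hv)
    (fun _ _ hv w hw => (h.adj_iff hv w).mpr hw) (h.lt_ncard_S' hr (by omega)), _, _, _,
    h.extend hr hq⟩

lemma inGm_induce (h : GoodPartition r t q H W S S') (hfree : FamFree 𝓕 H) (hr : 0 < r)
    (hq : q + r ≤ Fintype.card V) {x : Fin r → V} (hx : ∀ i, x i ∈ S' i)
    [Fintype {v | ∀ i, v ≠ x i}] : InGm 𝓕 r t q (H.induce {v | ∀ i, v ≠ x i}) :=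
  ⟨hfree.of_copy (SimpleGraph.Copy.induce _ _), _, _, _, h.induce hr hq hx⟩

end GoodPartition

lemma InGm.of_iso {ι V V' : Type*} [Fintype V] [Fintype V'] {𝓕 : ι → FinGraph} {r t q : ℕ}
    {H : SimpleGraph V} {H' : SimpleGraph V'} (h : InGm 𝓕 r t q H) (φ : H ≃g H') :
    InGm 𝓕 r t q H' :=
  let ⟨hfree, _, _, _, hgp⟩ := h
  ⟨hfree.of_copy φ.symm.toCopy, _, _, _, hgp.map φ⟩

lemma InGm.edgeCount_le {ι V : Type*} [Fintype V] {𝓕 : ι → FinGraph} {r t q m N : ℕ}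
    {K : SimpleGraph V} (hK : InGm 𝓕 r t q K) (hV : Fintype.card V = m)
    (hmax : ∀ K' : SimpleGraph (Fin m), InGm 𝓕 r t q K' → edgeCount K' ≤ N) :
    edgeCount K ≤ N := by
  let φ := SimpleGraph.Iso.map (Fintype.equivFinOfCardEq hV) K
  rw [φ.edgeCount_eq]
  exact hmax _ (hK.of_iso φ)

theorem extremal_in_Gm_stable_general {ι : Type*}
    (𝓕 : ι → FinGraph) (r t q : ℕ) (hr : 2 ≤ r)
    (htmax : ∀ i, (𝓕 i).1 ≤ t) :
    ∃ M₀ : ℕ, ∀ m, M₀ ≤ m → ∀ H : SimpleGraph (Fin m),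
      FamFree 𝓕 H →
      ∀ (W : Set (Fin m)) (S S' : Fin r → Set (Fin m)),
        GoodPartition r t q H W S S' →
        (∀ K : SimpleGraph (Fin m), InGm 𝓕 r t q K → edgeCount K ≤ edgeCount H) →
        (InGm 𝓕 r t q (extendGraph H S) ∧
          ∀ K : SimpleGraph (Fin (m + r)), InGm 𝓕 r t q K →
            edgeCount K ≤ edgeCount (extendGraph H S)) ∧
        (∀ x : Fin r → Fin m, (∀ i, x i ∈ S' i) →
          InGm 𝓕 r t q (H.induce {v : Fin m | ∀ i, v ≠ x i}) ∧
          ∀ K : SimpleGraph (Fin (m - r)), InGm 𝓕 r t q K →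
            edgeCount K ≤ edgeCount (H.induce {v : Fin m | ∀ i, v ≠ x i})) := by
  refine ⟨q + r + r * (t ^ 2 + t + 1), fun m hm H hfree W S S' hgp hmax => ?_⟩
  have hr0 : 0 < r := by omega
  have hcard : Fintype.card (Fin m) = m := Fintype.card_fin m
  refine ⟨⟨hgp.inGm_extendGraph hfree htmax hr0 (by omega), ?_⟩,
    fun x hx => ⟨hgp.inGm_induce hfree hr0 (by omega) hx, ?_⟩⟩
  · rintro K ⟨hKfree, _, T, T', hK⟩
    have hcardK : Fintype.card (Fin (m + r)) = m + r := Fintype.card_fin _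
    choose y hy using fun i =>
      Set.nonempty_of_ncard_ne_zero (hK.lt_ncard_S' hr0 (by omega) i).ne_bot
    have hle := (hK.inGm_induce hKfree hr0 (by omega) hy).edgeCount_le
      (by rw [hK.card_setOf_forall_ne hy]; omega) hmax
    rw [hK.edgeCount_eq_edgeCount_induce_add hr0 (by omega) hy, hgp.edgeCount_extendGraph hr0,
      hcardK, hcard, Nat.add_sub_cancel]
    omega
  · rintro K ⟨hKfree, _, T, T', hK⟩
    have hcardK : Fintype.card (Fin (m - r)) = m - r := Fintype.card_fin _
    have hle := (hK.inGm_extendGraph hKfree htmax hr0 (by omega)).edgeCount_le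
      (by rw [Fintype.card_sum, hcardK, Fintype.card_fin]; omega) hmax
    rw [hK.edgeCount_extendGraph hr0, hgp.edgeCount_eq_edgeCount_induce_add hr0 (by omega) hx,
      hcardK, hcard] at hle
    omega

/-- **Claim 1.** If `H` has the maximum number of edges among all members of `𝒢_m`, then
`𝒟(H)` has the maximum number of edges among all members of `𝒢_{m+r}`, and `𝒟⁻¹(H)`
(obtained by deleting one vertex of `S'_i` for each `i`) has the maximum number of edges
among all members of `𝒢_{m-r}`. -/
theorem extremal_in_Gm_stable {ι : Type*} [Fintype ι] [Nonempty ι]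
    (𝓕 : ι → FinGraph) (r t q : ℕ) (hr : 2 ≤ r)
    (hχmin : ∀ i, ((r : ℕ∞) + 1) ≤ (𝓕 i).2.chromaticNumber)
    (hχeq : ∃ i, (𝓕 i).2.chromaticNumber = ((r : ℕ∞) + 1))
    (htmax : ∀ i, (𝓕 i).1 ≤ t)
    (hteq : ∃ i, (𝓕 i).1 = t)
    (hq : IsLeast {s : ℕ | ∃ i, ContainsCopy (𝓕 i).2
      (gJoin (⊥ : SimpleGraph (Fin s)) (turanGraph (t * r) r))} q) :
    ∃ M₀ : ℕ, ∀ m, M₀ ≤ m → ∀ H : SimpleGraph (Fin m),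
      FamFree 𝓕 H →
      ∀ (W : Set (Fin m)) (S S' : Fin r → Set (Fin m)),
        GoodPartition r t q H W S S' →
        (∀ K : SimpleGraph (Fin m), InGm 𝓕 r t q K → edgeCount K ≤ edgeCount H) →
        (InGm 𝓕 r t q (extendGraph H S) ∧
          ∀ K : SimpleGraph (Fin (m + r)), InGm 𝓕 r t q K →
            edgeCount K ≤ edgeCount (extendGraph H S)) ∧
        (∀ x : Fin r → Fin m, (∀ i, x i ∈ S' i) →
          InGm 𝓕 r t q (H.induce {v : Fin m | ∀ i, v ≠ x i}) ∧
          ∀ K : SimpleGraph (Fin (m - r)), InGm 𝓕 r t q K →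
            edgeCount K ≤ edgeCount (H.induce {v : Fin m | ∀ i, v ≠ x i})) :=
  extremal_in_Gm_stable_general 𝓕 r t q hr htmax
end
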